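/- arXiv:2012.12614 — 2 statements merged into one kernel-verified Lean document; each statement's English description precedes it below -/
import Mathlib

section
/- For every β ∈ ℝ the matrix R_y(β) is orthogonal: R_y(β) · R_y(β)ᵀ = I₉. -/
open Matrix Real

/-- The reference harmonic coordinates ã = (0,0,0,0,√(7/12),0,0,0,√(5/12)). -/
noncomputable def aref : Fin 9 → ℝ :=
  ![0, 0, 0, 0, Real.sqrt (7/12), 0, 0, 0, Real.sqrt (5/12)]

noncomputable def S1 : Matrix (Fin 9) (Fin 9) ℝ :=
  Real.sqrt 2 • Matrix.diagonal ![28, 7, -8, -17, -20, -17, -8, 7, 28]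

noncomputable def S2 : Matrix (Fin 9) (Fin 9) ℝ :=
  Real.sqrt 3 •
  !![0, 14, 0, 0, 0, 0, 0, 0, 0;
     14, 0, 5*Real.sqrt 7, 0, 0, 0, 0, 0, 0;
     0, 5*Real.sqrt 7, 0, 9, 0, 0, 0, 0, 0;
     0, 0, 9, 0, 0, 0, 0, 0, 0;
     0, 0, 0, 0, 0, 2*Real.sqrt 5, 0, 0, 0;
     0, 0, 0, 0, 2*Real.sqrt 5, 0, 9, 0, 0;
     0, 0, 0, 0, 0, 9, 0, 5*Real.sqrt 7, 0;
     0, 0, 0, 0, 0, 0, 5*Real.sqrt 7, 0, 14;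
     0, 0, 0, 0, 0, 0, 0, 14, 0]

noncomputable def S3 : Matrix (Fin 9) (Fin 9) ℝ :=
  Real.sqrt 3 •
  !![0, 0, 0, 0, 0, 0, 0, 14, 0;
     0, 0, 0, 0, 0, 0, 5*Real.sqrt 7, 0, -14;
     0, 0, 0, 0, 0, 9, 0, -5*Real.sqrt 7, 0;
     0, 0, 0, 0, 2*Real.sqrt 5, 0, -9, 0, 0;
     0, 0, 0, 2*Real.sqrt 5, 0, 0, 0, 0, 0;
     0, 0, 9, 0, 0, 0, 0, 0, 0;
     0, 5*Real.sqrt 7, 0, -9, 0, 0, 0, 0, 0;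
     14, 0, -5*Real.sqrt 7, 0, 0, 0, 0, 0, 0;
     0, -14, 0, 0, 0, 0, 0, 0, 0]

noncomputable def S4 : Matrix (Fin 9) (Fin 9) ℝ :=
  Real.sqrt 6 •
  !![0, 0, 2*Real.sqrt 7, 0, 0, 0, 0, 0, 0;
     0, 0, 0, 3*Real.sqrt 7, 0, 0, 0, 0, 0;
     2*Real.sqrt 7, 0, 0, 0, 0, 0, 0, 0, 0;
     0, 3*Real.sqrt 7, 0, 10, 0, 0, 0, 0, 0;
     0, 0, 0, 0, 0, 0, 6*Real.sqrt 5, 0, 0;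
     0, 0, 0, 0, 0, -10, 0, 3*Real.sqrt 7, 0;
     0, 0, 0, 0, 6*Real.sqrt 5, 0, 0, 0, 2*Real.sqrt 7;
     0, 0, 0, 0, 0, 3*Real.sqrt 7, 0, 0, 0;
     0, 0, 0, 0, 0, 0, 2*Real.sqrt 7, 0, 0]

noncomputable def S5 : Matrix (Fin 9) (Fin 9) ℝ :=
  Real.sqrt 6 •
  !![0, 0, 0, 0, 0, 0, 2*Real.sqrt 7, 0, 0;
     0, 0, 0, 0, 0, 3*Real.sqrt 7, 0, 0, 0;
     0, 0, 0, 0, 6*Real.sqrt 5, 0, 0, 0, -2*Real.sqrt 7;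
     0, 0, 0, 0, 0, -10, 0, -3*Real.sqrt 7, 0;
     0, 0, 6*Real.sqrt 5, 0, 0, 0, 0, 0, 0;
     0, 3*Real.sqrt 7, 0, -10, 0, 0, 0, 0, 0;
     2*Real.sqrt 7, 0, 0, 0, 0, 0, 0, 0, 0;
     0, 0, 0, -3*Real.sqrt 7, 0, 0, 0, 0, 0;
     0, 0, -2*Real.sqrt 7, 0, 0, 0, 0, 0, 0]

/-- The five quadric matrices S₁,…,S₅, indexed by `Fin 5`. -/
noncomputable def S : Fin 5 → Matrix (Fin 9) (Fin 9) ℝ := ![S1, S2, S3, S4, S5]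

/-- Rotation about the z-axis acting on degree-4 spherical harmonic coefficients. -/
noncomputable def Rz (γ : ℝ) : Matrix (Fin 9) (Fin 9) ℝ :=
  !![Real.cos (4*γ), 0, 0, 0, 0, 0, 0, 0, Real.sin (4*γ);
     0, Real.cos (3*γ), 0, 0, 0, 0, 0, Real.sin (3*γ), 0;
     0, 0, Real.cos (2*γ), 0, 0, 0, Real.sin (2*γ), 0, 0;
     0, 0, 0, Real.cos γ, 0, Real.sin γ, 0, 0, 0;
     0, 0, 0, 0, 1, 0, 0, 0, 0;
     0, 0, 0, -Real.sin γ, 0, Real.cos γ, 0, 0, 0;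
     0, 0, -Real.sin (2*γ), 0, 0, 0, Real.cos (2*γ), 0, 0;
     0, -Real.sin (3*γ), 0, 0, 0, 0, 0, Real.cos (3*γ), 0;
     -Real.sin (4*γ), 0, 0, 0, 0, 0, 0, 0, Real.cos (4*γ)]

/-- The quarter-turn about the x-axis, X = R_x(π/2). -/
noncomputable def Xmat : Matrix (Fin 9) (Fin 9) ℝ :=
  (1/8 : ℝ) •
  !![0, 0, 0, 0, 0, 2*Real.sqrt 14, 0, -2*Real.sqrt 2, 0;
     0, -6, 0, 2*Real.sqrt 7, 0, 0, 0, 0, 0;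
     0, 0, 0, 0, 0, 2*Real.sqrt 2, 0, 2*Real.sqrt 14, 0;
     0, 2*Real.sqrt 7, 0, 6, 0, 0, 0, 0, 0;
     0, 0, 0, 0, 3, 0, 2*Real.sqrt 5, 0, Real.sqrt 35;
     -2*Real.sqrt 14, 0, -2*Real.sqrt 2, 0, 0, 0, 0, 0, 0;
     0, 0, 0, 0, 2*Real.sqrt 5, 0, 4, 0, -2*Real.sqrt 7;
     2*Real.sqrt 2, 0, -2*Real.sqrt 14, 0, 0, 0, 0, 0, 0;
     0, 0, 0, 0, Real.sqrt 35, 0, -2*Real.sqrt 7, 0, 1]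

/-- Rotation about the y-axis: R_y(β) = X · R_z(β) · Xᵀ. -/
noncomputable def Ry (β : ℝ) : Matrix (Fin 9) (Fin 9) ℝ := Xmat * Rz β * Xmatᵀ

/-- Rotation about the x-axis: R_x(α) = R_y(π/2)ᵀ · R_z(α) · R_y(π/2). -/
noncomputable def Rx (α : ℝ) : Matrix (Fin 9) (Fin 9) ℝ :=
  (Ry (Real.pi/2))ᵀ * Rz α * Ry (Real.pi/2)

/-- The deviation measure d(a) = Σₖ (aᵀ Sₖ a)². -/
noncomputable def dmeas (a : Fin 9 → ℝ) : ℝ :=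
  ∑ k : Fin 5, (a ⬝ᵥ (S k).mulVec a) ^ 2

set_option maxHeartbeats 2000000 in
lemma sqrt14_eq : Real.sqrt 14 = Real.sqrt 2 * Real.sqrt 7 := by
  rw [← Real.sqrt_mul (by norm_num)]; norm_num

lemma sqrt35_eq : Real.sqrt 35 = Real.sqrt 5 * Real.sqrt 7 := by
  rw [← Real.sqrt_mul (by norm_num)]; norm_num

lemma sq2 : Real.sqrt 2 * Real.sqrt 2 = 2 := Real.mul_self_sqrt (by norm_num)
lemma sq5 : Real.sqrt 5 * Real.sqrt 5 = 5 := Real.mul_self_sqrt (by norm_num)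
lemma sq7 : Real.sqrt 7 * Real.sqrt 7 = 7 := Real.mul_self_sqrt (by norm_num)

section consval
variable {α : Type*}
lemma cv9_5 (x : α) (u : Fin 8 → α) : vecCons x u (5:Fin 9) = u 4 := rfl
lemma cv9_6 (x : α) (u : Fin 8 → α) : vecCons x u (6:Fin 9) = u 5 := rfl
lemma cv9_7 (x : α) (u : Fin 8 → α) : vecCons x u (7:Fin 9) = u 6 := rfl
lemma cv9_8 (x : α) (u : Fin 8 → α) : vecCons x u (8:Fin 9) = u 7 := rfl
lemma cv8_5 (x : α) (u : Fin 7 → α) : vecCons x u (5:Fin 8) = u 4 := rfl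
lemma cv8_6 (x : α) (u : Fin 7 → α) : vecCons x u (6:Fin 8) = u 5 := rfl
lemma cv8_7 (x : α) (u : Fin 7 → α) : vecCons x u (7:Fin 8) = u 6 := rfl
lemma cv7_5 (x : α) (u : Fin 6 → α) : vecCons x u (5:Fin 7) = u 4 := rfl
lemma cv7_6 (x : α) (u : Fin 6 → α) : vecCons x u (6:Fin 7) = u 5 := rfl
lemma cv6_5 (x : α) (u : Fin 5 → α) : vecCons x u (5:Fin 6) = u 4 := rfl
end consval

noncomputable def RzT (γ : ℝ) : Matrix (Fin 9) (Fin 9) ℝ :=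
  !![Real.cos (4*γ), 0, 0, 0, 0, 0, 0, 0, -Real.sin (4*γ);
     0, Real.cos (3*γ), 0, 0, 0, 0, 0, -Real.sin (3*γ), 0;
     0, 0, Real.cos (2*γ), 0, 0, 0, -Real.sin (2*γ), 0, 0;
     0, 0, 0, Real.cos γ, 0, -Real.sin γ, 0, 0, 0;
     0, 0, 0, 0, 1, 0, 0, 0, 0;
     0, 0, 0, Real.sin γ, 0, Real.cos γ, 0, 0, 0;
     0, 0, Real.sin (2*γ), 0, 0, 0, Real.cos (2*γ), 0, 0;
     0, Real.sin (3*γ), 0, 0, 0, 0, 0, Real.cos (3*γ), 0;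
     Real.sin (4*γ), 0, 0, 0, 0, 0, 0, 0, Real.cos (4*γ)]

noncomputable def XmatT : Matrix (Fin 9) (Fin 9) ℝ :=
  (1/8 : ℝ) •
  !![0, 0, 0, 0, 0, -(2*Real.sqrt 14), 0, 2*Real.sqrt 2, 0;
     0, -6, 0, 2*Real.sqrt 7, 0, 0, 0, 0, 0;
     0, 0, 0, 0, 0, -(2*Real.sqrt 2), 0, -(2*Real.sqrt 14), 0;
     0, 2*Real.sqrt 7, 0, 6, 0, 0, 0, 0, 0;
     0, 0, 0, 0, 3, 0, 2*Real.sqrt 5, 0, Real.sqrt 35;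
     2*Real.sqrt 14, 0, 2*Real.sqrt 2, 0, 0, 0, 0, 0, 0;
     0, 0, 0, 0, 2*Real.sqrt 5, 0, 4, 0, -(2*Real.sqrt 7);
     -(2*Real.sqrt 2), 0, 2*Real.sqrt 14, 0, 0, 0, 0, 0, 0;
     0, 0, 0, 0, Real.sqrt 35, 0, -(2*Real.sqrt 7), 0, 1]

set_option maxHeartbeats 4000000 in
lemma Rz_T (β : ℝ) : (Rz β)ᵀ = RzT β := by
  ext i j
  fin_cases i <;> fin_cases j <;>
    simp [Rz, RzT, cv9_5, cv9_6, cv9_7, cv9_8, cv8_5, cv8_6, cv8_7, cv7_5, cv7_6,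
      cv6_5, Matrix.vecHead, Matrix.vecTail]

set_option maxHeartbeats 4000000 in
lemma Xmat_T : Xmatᵀ = XmatT := by
  ext i j
  fin_cases i <;> fin_cases j <;>
    simp [Xmat, XmatT, cv9_5, cv9_6, cv9_7, cv9_8, cv8_5, cv8_6, cv8_7, cv7_5, cv7_6,
      cv6_5, Matrix.vecHead, Matrix.vecTail]

set_option maxHeartbeats 8000000 in
lemma Rz_orth (β : ℝ) : Rz β * (Rz β)ᵀ = 1 := by
  rw [Rz_T]
  ext i j
  fin_cases i <;> fin_cases j <;>
    norm_num [Rz, RzT, Matrix.mul_apply, Fin.sum_univ_succ, Matrix.one_apply,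
      Fin.ext_iff, cv9_5, cv9_6, cv9_7, cv9_8, cv8_5, cv8_6, cv8_7, cv7_5, cv7_6,
      cv6_5, Matrix.vecHead, Matrix.vecTail] <;>
    nlinarith [Real.sin_sq_add_cos_sq β, Real.sin_sq_add_cos_sq (2*β),
      Real.sin_sq_add_cos_sq (3*β), Real.sin_sq_add_cos_sq (4*β)]

set_option maxHeartbeats 8000000 in
lemma Xmat_orth : Xmat * Xmatᵀ = 1 := by
  rw [Xmat_T]
  ext i j
  fin_cases i <;> fin_cases j <;>
    norm_num [Xmat, XmatT, Matrix.mul_apply, Fin.sum_univ_succ, Matrix.one_apply,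
      Fin.ext_iff, sqrt14_eq, sqrt35_eq, cv9_5, cv9_6, cv9_7, cv9_8, cv8_5, cv8_6,
      cv8_7, cv7_5, cv7_6, cv6_5, Matrix.vecHead, Matrix.vecTail] <;>
    nlinarith [sq2, sq5, sq7, Real.sqrt_nonneg 2, Real.sqrt_nonneg 5, Real.sqrt_nonneg 7,
      mul_pos (Real.sqrt_pos.mpr (show (0:ℝ) < 5 by norm_num))
        (Real.sqrt_pos.mpr (show (0:ℝ) < 7 by norm_num))]

lemma Xmat_orth' : Xmatᵀ * Xmat = 1 :=
  mul_eq_one_comm.mp Xmat_orth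

/-- R_y(β) is orthogonal. -/
theorem stmt_10 (β : ℝ) : Ry β * (Ry β)ᵀ = 1 := by
  simp only [Ry, Matrix.transpose_mul, Matrix.transpose_transpose]
  calc Xmat * Rz β * Xmatᵀ * (Xmat * ((Rz β)ᵀ * Xmatᵀ))
      = Xmat * (Rz β * (Xmatᵀ * Xmat) * (Rz β)ᵀ) * Xmatᵀ := by
        noncomm_ring
    _ = 1 := by rw [Xmat_orth', Matrix.mul_one, Rz_orth, Matrix.mul_one, Xmat_orth]
end

section
/- The solution set of the system is invariant under R_z(γ) and X: if a ∈ ℝ⁹ satisfies aᵀa = 1 and aᵀSₖa = 0 for all k = 1,…,5, then for every γ ∈ ℝ the vector b = R_z(γ) · a satisfies bᵀb = 1 and bᵀSₖb = 0 for all k, and likewise the vector c = X · a satisfies cᵀc = 1 and cᵀSₖc = 0 for all k. -/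
open Matrix Real

private theorem sum9 {M : Type*} [AddCommMonoid M] (f : Fin 9 → M) :
    ∑ i, f i = f 0 + f 1 + f 2 + f 3 + f 4 + f 5 + f 6 + f 7 + f 8 := by
  rw [Fin.sum_univ_castSucc, Fin.sum_univ_eight]
  rfl

section
variable {α : Type*} (x0 x1 x2 x3 x4 x5 x6 x7 x8 : α)
private theorem nth0 : ![x0,x1,x2,x3,x4,x5,x6,x7,x8] 0 = x0 := rfl
private theorem nth1 : ![x0,x1,x2,x3,x4,x5,x6,x7,x8] 1 = x1 := rfl
private theorem nth2 : ![x0,x1,x2,x3,x4,x5,x6,x7,x8] 2 = x2 := rfl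
private theorem nth3 : ![x0,x1,x2,x3,x4,x5,x6,x7,x8] 3 = x3 := rfl
private theorem nth4 : ![x0,x1,x2,x3,x4,x5,x6,x7,x8] 4 = x4 := rfl
private theorem nth5 : ![x0,x1,x2,x3,x4,x5,x6,x7,x8] 5 = x5 := rfl
private theorem nth6 : ![x0,x1,x2,x3,x4,x5,x6,x7,x8] 6 = x6 := rfl
private theorem nth7 : ![x0,x1,x2,x3,x4,x5,x6,x7,x8] 7 = x7 := rfl
private theorem nth8 : ![x0,x1,x2,x3,x4,x5,x6,x7,x8] 8 = x8 := rfl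
end

private theorem Sval0 : S 0 = S1 := rfl
private theorem Sval1 : S 1 = S2 := rfl
private theorem Sval2 : S 2 = S3 := rfl
private theorem Sval3 : S 3 = S4 := rfl
private theorem Sval4 : S 4 = S5 := rfl

set_option maxRecDepth 16000 in
set_option maxHeartbeats 4000000 in
/-- the solution set of the system is invariant under R_z(γ) and X. -/
theorem stmt_18 (a : Fin 9 → ℝ)
    (h1 : a ⬝ᵥ a = 1) (h2 : ∀ k : Fin 5, a ⬝ᵥ (S k).mulVec a = 0) :
    (∀ γ : ℝ,
      ((Rz γ).mulVec a) ⬝ᵥ ((Rz γ).mulVec a) = 1 ∧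
      ∀ k : Fin 5, ((Rz γ).mulVec a) ⬝ᵥ (S k).mulVec ((Rz γ).mulVec a) = 0) ∧
    ((Xmat.mulVec a) ⬝ᵥ (Xmat.mulVec a) = 1 ∧
      ∀ k : Fin 5, (Xmat.mulVec a) ⬝ᵥ (S k).mulVec (Xmat.mulVec a) = 0) := by
  have hr2 : Real.sqrt 2 ^ 2 = 2 := Real.sq_sqrt (by norm_num)
  have hr3 : Real.sqrt 3 ^ 2 = 3 := Real.sq_sqrt (by norm_num)
  have hr5 : Real.sqrt 5 ^ 2 = 5 := Real.sq_sqrt (by norm_num)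
  have hr7 : Real.sqrt 7 ^ 2 = 7 := Real.sq_sqrt (by norm_num)
  have h6' : Real.sqrt 6 = Real.sqrt 2 * Real.sqrt 3 := by
    rw [show (6:ℝ) = 2*3 by norm_num, Real.sqrt_mul (by norm_num)]
  have h14' : Real.sqrt 14 = Real.sqrt 2 * Real.sqrt 7 := by
    rw [show (14:ℝ) = 2*7 by norm_num, Real.sqrt_mul (by norm_num)]
  have h35' : Real.sqrt 35 = Real.sqrt 5 * Real.sqrt 7 := by
    rw [show (35:ℝ) = 5*7 by norm_num, Real.sqrt_mul (by norm_num)]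
  have E0 := h2 0
  have E1 := h2 1
  have E2 := h2 2
  have E3 := h2 3
  have E4 := h2 4
  have hN := h1
  simp only [Sval0, Sval1, Sval2, Sval3, Sval4, S1, S2, S3, S4, S5, Rz, Xmat, Matrix.mulVec, dotProduct, sum9, Matrix.smul_apply, smul_eq_mul, Matrix.of_apply, Matrix.diagonal, nth0, nth1, nth2, nth3, nth4, nth5, nth6, nth7, nth8, Fin.reduceEq, reduceIte, ite_true, ite_false, h6', h14', h35'] at E0 E1 E2 E3 E4 hN
  constructor
  · intro γ
    have hpy : Real.cos γ ^ 2 + Real.sin γ ^ 2 = 1 := Real.cos_sq_add_sin_sq γ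
    have hc2 : Real.cos (2*γ) = 2*Real.cos γ^2 - 1 := Real.cos_two_mul γ
    have hs2 : Real.sin (2*γ) = 2*Real.sin γ*Real.cos γ := Real.sin_two_mul γ
    have hc3 : Real.cos (3*γ) = 4*Real.cos γ^3 - 3*Real.cos γ := Real.cos_three_mul γ
    have hs3 : Real.sin (3*γ) = 3*Real.sin γ - 4*Real.sin γ^3 := Real.sin_three_mul γ
    have hc4 : Real.cos (4*γ) = 2*(2*Real.cos γ^2-1)^2 - 1 := by
      rw [show (4:ℝ)*γ = 2*(2*γ) by ring, Real.cos_two_mul, Real.cos_two_mul]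
    have hs4 : Real.sin (4*γ) = 2*(2*Real.sin γ*Real.cos γ)*(2*Real.cos γ^2-1) := by
      rw [show (4:ℝ)*γ = 2*(2*γ) by ring, Real.sin_two_mul, Real.sin_two_mul, Real.cos_two_mul]
    refine ⟨?_, ?_⟩
    · simp only [Sval0, Sval1, Sval2, Sval3, Sval4, S1, S2, S3, S4, S5, Rz, Xmat, Matrix.mulVec, dotProduct, sum9, Matrix.smul_apply, smul_eq_mul, Matrix.of_apply, Matrix.diagonal, nth0, nth1, nth2, nth3, nth4, nth5, nth6, nth7, nth8, Fin.reduceEq, reduceIte, ite_true, ite_false, h6', h14', h35']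
      simp only [hc2, hs2, hc3, hs3, hc4, hs4]
      linear_combination hN + ((a 7)^2 + (a 5)^2 + (a 3)^2 + (a 1)^2 + (-8)*(Real.sin γ)^2*(a 7)^2 + (-8)*(Real.sin γ)^2*(a 1)^2 + (16)*(Real.sin γ)^4*(a 7)^2 + (16)*(Real.sin γ)^4*(a 1)^2 + (16)*(Real.cos γ)^2*(a 8)^2 + (-8)*(Real.cos γ)^2*(a 7)^2 + (4)*(Real.cos γ)^2*(a 6)^2 + (4)*(Real.cos γ)^2*(a 2)^2 + (-8)*(Real.cos γ)^2*(a 1)^2 + (16)*(Real.cos γ)^2*(a 0)^2 + (-16)*(Real.cos γ)^2*(Real.sin γ)^2*(a 7)^2 + (-16)*(Real.cos γ)^2*(Real.sin γ)^2*(a 1)^2 + (-64)*(Real.cos γ)^4*(a 8)^2 + (16)*(Real.cos γ)^4*(a 7)^2 + (16)*(Real.cos γ)^4*(a 1)^2 + (-64)*(Real.cos γ)^4*(a 0)^2 + (64)*(Real.cos γ)^6*(a 8)^2 + (64)*(Real.cos γ)^6*(a 0)^2)*hpy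
    · intro k
      fin_cases k
      · show ((Rz γ).mulVec a) ⬝ᵥ (S 0).mulVec ((Rz γ).mulVec a) = 0
        simp only [Sval0, Sval1, Sval2, Sval3, Sval4, S1, S2, S3, S4, S5, Rz, Xmat, Matrix.mulVec, dotProduct, sum9, Matrix.smul_apply, smul_eq_mul, Matrix.of_apply, Matrix.diagonal, nth0, nth1, nth2, nth3, nth4, nth5, nth6, nth7, nth8, Fin.reduceEq, reduceIte, ite_true, ite_false, h6', h14', h35']
        simp only [hc2, hs2, hc3, hs3, hc4, hs4]
        linear_combination ((1))*E0 + ((7)*(Real.sqrt 2)*(a 7)^2 + (-17)*(Real.sqrt 2)*(a 5)^2 + (-17)*(Real.sqrt 2)*(a 3)^2 + (7)*(Real.sqrt 2)*(a 1)^2 + (-56)*(Real.sqrt 2)*(Real.sin γ)^2*(a 7)^2 + (-56)*(Real.sqrt 2)*(Real.sin γ)^2*(a 1)^2 + (112)*(Real.sqrt 2)*(Real.sin γ)^4*(a 7)^2 + (112)*(Real.sqrt 2)*(Real.sin γ)^4*(a 1)^2 + (448)*(Real.sqrt 2)*(Real.cos γ)^2*(a 8)^2 + (-56)*(Real.sqrt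 2)*(Real.cos γ)^2*(a 7)^2 + (-32)*(Real.sqrt 2)*(Real.cos γ)^2*(a 6)^2 + (-32)*(Real.sqrt 2)*(Real.cos γ)^2*(a 2)^2 + (-56)*(Real.sqrt 2)*(Real.cos γ)^2*(a 1)^2 + (448)*(Real.sqrt 2)*(Real.cos γ)^2*(a 0)^2 + (-112)*(Real.sqrt 2)*(Real.cos γ)^2*(Real.sin γ)^2*(a 7)^2 + (-112)*(Real.sqrt 2)*(Real.cos γ)^2*(Real.sin γ)^2*(a 1)^2 + (-1792)*(Real.sqrt 2)*(Real.cos γ)^4*(a 8)^2 + (112)*(Real.sqrt 2)*(Real.cos γ)^4*(a 7)^2 + (112)*(Real.sqrt 2)*(Real.cos γ)^4*(a 1)^2 + (-1792)*(Real.sqrt 2)*(Real.cos γ)^4*(a 0)^2 + (1792)*(Real.sqrt 2)*(Real.cos γ)^6*(a 8)^2 + (1792)*(Real.sqrt 2)*(Real.cos γ)^6*(a 0)^2)*hpy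
      · show ((Rz γ).mulVec a) ⬝ᵥ (S 1).mulVec ((Rz γ).mulVec a) = 0
        simp only [Sval0, Sval1, Sval2, Sval3, Sval4, S1, S2, S3, S4, S5, Rz, Xmat, Matrix.mulVec, dotProduct, sum9, Matrix.smul_apply, smul_eq_mul, Matrix.of_apply, Matrix.diagonal, nth0, nth1, nth2, nth3, nth4, nth5, nth6, nth7, nth8, Fin.reduceEq, reduceIte, ite_true, ite_false, h6', h14', h35']
        simp only [hc2, hs2, hc3, hs3, hc4, hs4]
        linear_combination ((Real.cos γ))*E1 + ((-1)*(Real.sin γ))*E2 + ((112)*(Real.sqrt 3)*(Real.sin γ)*(a 1)*(a 8) + (-112)*(Real.sqrt 3)*(Real.sin γ)*(a 0)*(a 7) + (112)*(Real.sqrt 3)*(Real.cos γ)*(a 7)*(a 8) + (36)*(Real.sqrt 3)*(Real.cos γ)*(a 5)*(a 6) + (36)*(Real.sqrt 3)*(Real.cos γ)*(a 2)*(a 3) + (112)*(Real.sqrt 3)*(Real.cos γ)*(a 0)*(a 1) + (448)*(Real.sqrt 3)*(Real.cos γ)*(Real.sin γ)^2*(a 7)*(a 8) + (448)*(Real.sqrt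 3)*(Real.cos γ)*(Real.sin γ)^2*(a 0)*(a 1) + (-896)*(Real.sqrt 3)*(Real.cos γ)^2*(Real.sin γ)*(a 1)*(a 8) + (896)*(Real.sqrt 3)*(Real.cos γ)^2*(Real.sin γ)*(a 0)*(a 7) + (-672)*(Real.sqrt 3)*(Real.cos γ)^3*(a 7)*(a 8) + (-672)*(Real.sqrt 3)*(Real.cos γ)^3*(a 0)*(a 1) + (-896)*(Real.sqrt 3)*(Real.cos γ)^3*(Real.sin γ)^2*(a 7)*(a 8) + (-896)*(Real.sqrt 3)*(Real.cos γ)^3*(Real.sin γ)^2*(a 0)*(a 1) + (896)*(Real.sqrt 3)*(Real.cos γ)^4*(Real.sin γ)*(a 1)*(a 8) + (-896)*(Real.sqrt 3)*(Real.cos γ)^4*(Real.sin γ)*(a 0)*(a 7) + (896)*(Real.sqrt 3)*(Real.cos γ)^5*(a 7)*(a 8) + (896)*(Real.sqrt 3)*(Real.cos γ)^5*(a 0)*(a 1) + (40)*(Real.sqrt 3)*(Real.sqrt 7)*(Real.sin γ)*(a 2)*(a 7) + (-40)*(Real.sqrt 3)*(Real.sqrt 7)*(Real.sin γ)*(a 1)*(a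 6) + (-20)*(Real.sqrt 3)*(Real.sqrt 7)*(Real.cos γ)*(a 6)*(a 7) + (-20)*(Real.sqrt 3)*(Real.sqrt 7)*(Real.cos γ)*(a 1)*(a 2) + (-80)*(Real.sqrt 3)*(Real.sqrt 7)*(Real.cos γ)*(Real.sin γ)^2*(a 6)*(a 7) + (-80)*(Real.sqrt 3)*(Real.sqrt 7)*(Real.cos γ)*(Real.sin γ)^2*(a 1)*(a 2) + (-80)*(Real.sqrt 3)*(Real.sqrt 7)*(Real.cos γ)^2*(Real.sin γ)*(a 2)*(a 7) + (80)*(Real.sqrt 3)*(Real.sqrt 7)*(Real.cos γ)^2*(Real.sin γ)*(a 1)*(a 6) + (80)*(Real.sqrt 3)*(Real.sqrt 7)*(Real.cos γ)^3*(a 6)*(a 7) + (80)*(Real.sqrt 3)*(Real.sqrt 7)*(Real.cos γ)^3*(a 1)*(a 2))*hpy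
      · show ((Rz γ).mulVec a) ⬝ᵥ (S 2).mulVec ((Rz γ).mulVec a) = 0
        simp only [Sval0, Sval1, Sval2, Sval3, Sval4, S1, S2, S3, S4, S5, Rz, Xmat, Matrix.mulVec, dotProduct, sum9, Matrix.smul_apply, smul_eq_mul, Matrix.of_apply, Matrix.diagonal, nth0, nth1, nth2, nth3, nth4, nth5, nth6, nth7, nth8, Fin.reduceEq, reduceIte, ite_true, ite_false, h6', h14', h35']
        simp only [hc2, hs2, hc3, hs3, hc4, hs4]
        linear_combination ((Real.sin γ))*E1 + ((Real.cos γ))*E2 + ((112)*(Real.sqrt 3)*(Real.sin γ)*(a 7)*(a 8) + (112)*(Real.sqrt 3)*(Real.sin γ)*(a 0)*(a 1) + (-36)*(Real.sqrt 3)*(Real.cos γ)*(a 3)*(a 6) + (36)*(Real.sqrt 3)*(Real.cos γ)*(a 2)*(a 5) + (-112)*(Real.sqrt 3)*(Real.cos γ)*(a 1)*(a 8) + (112)*(Real.sqrt 3)*(Real.cos γ)*(a 0)*(a 7) + (-448)*(Real.sqrt 3)*(Real.cos γ)*(Real.sin γ)^2*(a 1)*(a 8) + (448)*(Real.sqrt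 3)*(Real.cos γ)*(Real.sin γ)^2*(a 0)*(a 7) + (-896)*(Real.sqrt 3)*(Real.cos γ)^2*(Real.sin γ)*(a 7)*(a 8) + (-896)*(Real.sqrt 3)*(Real.cos γ)^2*(Real.sin γ)*(a 0)*(a 1) + (672)*(Real.sqrt 3)*(Real.cos γ)^3*(a 1)*(a 8) + (-672)*(Real.sqrt 3)*(Real.cos γ)^3*(a 0)*(a 7) + (896)*(Real.sqrt 3)*(Real.cos γ)^3*(Real.sin γ)^2*(a 1)*(a 8) + (-896)*(Real.sqrt 3)*(Real.cos γ)^3*(Real.sin γ)^2*(a 0)*(a 7) + (896)*(Real.sqrt 3)*(Real.cos γ)^4*(Real.sin γ)*(a 7)*(a 8) + (896)*(Real.sqrt 3)*(Real.cos γ)^4*(Real.sin γ)*(a 0)*(a 1) + (-896)*(Real.sqrt 3)*(Real.cos γ)^5*(a 1)*(a 8) + (896)*(Real.sqrt 3)*(Real.cos γ)^5*(a 0)*(a 7) + (40)*(Real.sqrt 3)*(Real.sqrt 7)*(Real.sin γ)*(a 6)*(a 7) + (40)*(Real.sqrt 3)*(Real.sqrt 7)*(Real.sin γ)*(a 1)*(a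 2) + (20)*(Real.sqrt 3)*(Real.sqrt 7)*(Real.cos γ)*(a 2)*(a 7) + (-20)*(Real.sqrt 3)*(Real.sqrt 7)*(Real.cos γ)*(a 1)*(a 6) + (80)*(Real.sqrt 3)*(Real.sqrt 7)*(Real.cos γ)*(Real.sin γ)^2*(a 2)*(a 7) + (-80)*(Real.sqrt 3)*(Real.sqrt 7)*(Real.cos γ)*(Real.sin γ)^2*(a 1)*(a 6) + (-80)*(Real.sqrt 3)*(Real.sqrt 7)*(Real.cos γ)^2*(Real.sin γ)*(a 6)*(a 7) + (-80)*(Real.sqrt 3)*(Real.sqrt 7)*(Real.cos γ)^2*(Real.sin γ)*(a 1)*(a 2) + (-80)*(Real.sqrt 3)*(Real.sqrt 7)*(Real.cos γ)^3*(a 2)*(a 7) + (80)*(Real.sqrt 3)*(Real.sqrt 7)*(Real.cos γ)^3*(a 1)*(a 6))*hpy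
      · show ((Rz γ).mulVec a) ⬝ᵥ (S 3).mulVec ((Rz γ).mulVec a) = 0
        simp only [Sval0, Sval1, Sval2, Sval3, Sval4, S1, S2, S3, S4, S5, Rz, Xmat, Matrix.mulVec, dotProduct, sum9, Matrix.smul_apply, smul_eq_mul, Matrix.of_apply, Matrix.diagonal, nth0, nth1, nth2, nth3, nth4, nth5, nth6, nth7, nth8, Fin.reduceEq, reduceIte, ite_true, ite_false, h6', h14', h35']
        simp only [hc2, hs2, hc3, hs3, hc4, hs4]
        linear_combination ((-1) + (2)*(Real.cos γ)^2)*E3 + ((-2)*(Real.cos γ)*(Real.sin γ))*E4 + ((10)*(Real.sqrt 2)*(Real.sqrt 3)*(a 5)^2 + (-10)*(Real.sqrt 2)*(Real.sqrt 3)*(a 3)^2 + (-6)*(Real.sqrt 2)*(Real.sqrt 3)*(Real.sqrt 7)*(a 5)*(a 7) + (-6)*(Real.sqrt 2)*(Real.sqrt 3)*(Real.sqrt 7)*(a 1)*(a 3) + (-24)*(Real.sqrt 2)*(Real.sqrt 3)*(Real.sqrt 7)*(Real.sin γ)^2*(a 5)*(a 7) + (-24)*(Real.sqrt 2)*(Real.sqrt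 3)*(Real.sqrt 7)*(Real.sin γ)^2*(a 1)*(a 3) + (-24)*(Real.sqrt 2)*(Real.sqrt 3)*(Real.sqrt 7)*(Real.cos γ)*(Real.sin γ)*(a 3)*(a 7) + (24)*(Real.sqrt 2)*(Real.sqrt 3)*(Real.sqrt 7)*(Real.cos γ)*(Real.sin γ)*(a 1)*(a 5) + (-32)*(Real.sqrt 2)*(Real.sqrt 3)*(Real.sqrt 7)*(Real.cos γ)^2*(a 6)*(a 8) + (24)*(Real.sqrt 2)*(Real.sqrt 3)*(Real.sqrt 7)*(Real.cos γ)^2*(a 5)*(a 7) + (24)*(Real.sqrt 2)*(Real.sqrt 3)*(Real.sqrt 7)*(Real.cos γ)^2*(a 1)*(a 3) + (-32)*(Real.sqrt 2)*(Real.sqrt 3)*(Real.sqrt 7)*(Real.cos γ)^2*(a 0)*(a 2) + (64)*(Real.sqrt 2)*(Real.sqrt 3)*(Real.sqrt 7)*(Real.cos γ)^4*(a 6)*(a 8) + (64)*(Real.sqrt 2)*(Real.sqrt 3)*(Real.sqrt 7)*(Real.cos γ)^4*(a 0)*(a 2))*hpy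
      · show ((Rz γ).mulVec a) ⬝ᵥ (S 4).mulVec ((Rz γ).mulVec a) = 0
        simp only [Sval0, Sval1, Sval2, Sval3, Sval4, S1, S2, S3, S4, S5, Rz, Xmat, Matrix.mulVec, dotProduct, sum9, Matrix.smul_apply, smul_eq_mul, Matrix.of_apply, Matrix.diagonal, nth0, nth1, nth2, nth3, nth4, nth5, nth6, nth7, nth8, Fin.reduceEq, reduceIte, ite_true, ite_false, h6', h14', h35']
        simp only [hc2, hs2, hc3, hs3, hc4, hs4]
        linear_combination ((2)*(Real.cos γ)*(Real.sin γ))*E3 + ((-1) + (2)*(Real.cos γ)^2)*E4 + ((20)*(Real.sqrt 2)*(Real.sqrt 3)*(a 3)*(a 5) + (6)*(Real.sqrt 2)*(Real.sqrt 3)*(Real.sqrt 7)*(a 3)*(a 7) + (-6)*(Real.sqrt 2)*(Real.sqrt 3)*(Real.sqrt 7)*(a 1)*(a 5) + (24)*(Real.sqrt 2)*(Real.sqrt 3)*(Real.sqrt 7)*(Real.sin γ)^2*(a 3)*(a 7) + (-24)*(Real.sqrt 2)*(Real.sqrt 3)*(Real.sqrt 7)*(Real.sin γ)^2*(a 1)*(a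 5) + (-24)*(Real.sqrt 2)*(Real.sqrt 3)*(Real.sqrt 7)*(Real.cos γ)*(Real.sin γ)*(a 5)*(a 7) + (-24)*(Real.sqrt 2)*(Real.sqrt 3)*(Real.sqrt 7)*(Real.cos γ)*(Real.sin γ)*(a 1)*(a 3) + (-24)*(Real.sqrt 2)*(Real.sqrt 3)*(Real.sqrt 7)*(Real.cos γ)^2*(a 3)*(a 7) + (32)*(Real.sqrt 2)*(Real.sqrt 3)*(Real.sqrt 7)*(Real.cos γ)^2*(a 2)*(a 8) + (24)*(Real.sqrt 2)*(Real.sqrt 3)*(Real.sqrt 7)*(Real.cos γ)^2*(a 1)*(a 5) + (-32)*(Real.sqrt 2)*(Real.sqrt 3)*(Real.sqrt 7)*(Real.cos γ)^2*(a 0)*(a 6) + (-64)*(Real.sqrt 2)*(Real.sqrt 3)*(Real.sqrt 7)*(Real.cos γ)^4*(a 2)*(a 8) + (64)*(Real.sqrt 2)*(Real.sqrt 3)*(Real.sqrt 7)*(Real.cos γ)^4*(a 0)*(a 6))*hpy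
  · refine ⟨?_, ?_⟩
    · simp only [Sval0, Sval1, Sval2, Sval3, Sval4, S1, S2, S3, S4, S5, Rz, Xmat, Matrix.mulVec, dotProduct, sum9, Matrix.smul_apply, smul_eq_mul, Matrix.of_apply, Matrix.diagonal, nth0, nth1, nth2, nth3, nth4, nth5, nth6, nth7, nth8, Fin.reduceEq, reduceIte, ite_true, ite_false, h6', h14', h35']
      linear_combination hN + ((1/16)*(a 7)^2 + (1/16)*(a 5)^2 + (1/16)*(a 2)^2 + (1/16)*(a 0)^2 + (1/16)*(Real.sqrt 7)^2*(a 7)^2 + (1/16)*(Real.sqrt 7)^2*(a 5)^2 + (1/16)*(Real.sqrt 7)^2*(a 2)^2 + (1/16)*(Real.sqrt 7)^2*(a 0)^2)*hr2 + ((1/16)*(a 6)^2 + (1/16)*(a 4)^2 + (1/16)*(Real.sqrt 7)*(a 6)*(a 8) + (1/64)*(Real.sqrt 7)^2*(a 8)^2 + (1/64)*(Real.sqrt 7)^2*(a 4)^2)*hr5 + ((9/64)*(a 8)^2 + (1/8)*(a 7)^2 + (1/16)*(a 6)^2 + (1/8)*(a 5)^2 + (5/64)*(a 4)^2 + (1/16)*(a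 3)^2 + (1/8)*(a 2)^2 + (1/16)*(a 1)^2 + (1/8)*(a 0)^2 + (-1/16)*(Real.sqrt 5)*(a 4)*(a 6))*hr7
    · intro k
      fin_cases k
      · show (Xmat.mulVec a) ⬝ᵥ (S 0).mulVec (Xmat.mulVec a) = 0
        simp only [Sval0, Sval1, Sval2, Sval3, Sval4, S1, S2, S3, S4, S5, Rz, Xmat, Matrix.mulVec, dotProduct, sum9, Matrix.smul_apply, smul_eq_mul, Matrix.of_apply, Matrix.diagonal, nth0, nth1, nth2, nth3, nth4, nth5, nth6, nth7, nth8, Fin.reduceEq, reduceIte, ite_true, ite_false, h6', h14', h35']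
        linear_combination ((-1/2))*E0 + ((-1/2)*(Real.sqrt 3))*E3 + ((7/4)*(Real.sqrt 2)*(a 7)^2 + (-1/2)*(Real.sqrt 2)*(a 5)^2 + (-17/16)*(Real.sqrt 2)*(a 2)^2 + (7/16)*(Real.sqrt 2)*(a 0)^2 + (-9/2)*(Real.sqrt 2)*(Real.sqrt 7)*(a 5)*(a 7) + (-3)*(Real.sqrt 2)*(Real.sqrt 7)*(a 0)*(a 2) + (-1/2)*(Real.sqrt 2)*(Real.sqrt 7)^2*(a 7)^2 + (7/4)*(Real.sqrt 2)*(Real.sqrt 7)^2*(a 5)^2 + (7/16)*(Real.sqrt 2)*(Real.sqrt 7)^2*(a 2)^2 + (-17/16)*(Real.sqrt 2)*(Real.sqrt 7)^2*(a 0)^2)*hr2 + ((-5)*(Real.sqrt 2)*(a 5)^2 + (5)*(Real.sqrt 2)*(a 3)^2 + (2)*(Real.sqrt 2)*(Real.sqrt 7)*(a 6)*(a 8) + (3)*(Real.sqrt 2)*(Real.sqrt 7)*(a 5)*(a 7) + (3)*(Real.sqrt 2)*(Real.sqrt 7)*(a 1)*(a 3) + (2)*(Real.sqrt 2)*(Real.sqrt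 7)*(a 0)*(a 2) + (6)*(Real.sqrt 2)*(Real.sqrt 5)*(a 4)*(a 6))*hr3 + ((-5/4)*(Real.sqrt 2)*(a 6)^2 + (-1/2)*(Real.sqrt 2)*(a 4)^2 + (-5/4)*(Real.sqrt 2)*(Real.sqrt 7)*(a 6)*(a 8) + (-5/16)*(Real.sqrt 2)*(Real.sqrt 7)^2*(a 8)^2 + (7/16)*(Real.sqrt 2)*(Real.sqrt 7)^2*(a 4)^2)*hr5 + ((-33/16)*(Real.sqrt 2)*(a 8)^2 + (-1)*(Real.sqrt 2)*(a 7)^2 + (7/4)*(Real.sqrt 2)*(a 6)^2 + (7/2)*(Real.sqrt 2)*(a 5)^2 + (35/16)*(Real.sqrt 2)*(a 4)^2 + (7/16)*(Real.sqrt 2)*(a 3)^2 + (7/8)*(Real.sqrt 2)*(a 2)^2 + (-17/16)*(Real.sqrt 2)*(a 1)^2 + (-17/8)*(Real.sqrt 2)*(a 0)^2 + (-7/4)*(Real.sqrt 2)*(Real.sqrt 5)*(a 4)*(a 6))*hr7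
      · show (Xmat.mulVec a) ⬝ᵥ (S 1).mulVec (Xmat.mulVec a) = 0
        simp only [Sval0, Sval1, Sval2, Sval3, Sval4, S1, S2, S3, S4, S5, Rz, Xmat, Matrix.mulVec, dotProduct, sum9, Matrix.smul_apply, smul_eq_mul, Matrix.of_apply, Matrix.diagonal, nth0, nth1, nth2, nth3, nth4, nth5, nth6, nth7, nth8, Fin.reduceEq, reduceIte, ite_true, ite_false, h6', h14', h35']
        linear_combination ((-1))*E4 + ((-1/4)*(Real.sqrt 2)*(Real.sqrt 3)*(a 2)*(a 6) + (-1/8)*(Real.sqrt 2)*(Real.sqrt 3)*(Real.sqrt 7)*(a 2)*(a 8) + (-1/4)*(Real.sqrt 2)*(Real.sqrt 3)*(Real.sqrt 7)*(a 0)*(a 6) + (-1/8)*(Real.sqrt 2)*(Real.sqrt 3)*(Real.sqrt 7)^2*(a 0)*(a 8))*hr5 + ((19/8)*(Real.sqrt 2)*(Real.sqrt 3)*(a 3)*(a 5) + (1/2)*(Real.sqrt 2)*(Real.sqrt 3)*(a 2)*(a 6) + (-3/4)*(Real.sqrt 2)*(Real.sqrt 3)*(a 1)*(a 7) + (-1/8)*(Real.sqrt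 2)*(Real.sqrt 3)*(a 0)*(a 8) + (5/8)*(Real.sqrt 2)*(Real.sqrt 3)*(Real.sqrt 7)*(a 3)*(a 7) + (5/8)*(Real.sqrt 2)*(Real.sqrt 3)*(Real.sqrt 7)*(a 2)*(a 8) + (-3/2)*(Real.sqrt 2)*(Real.sqrt 3)*(Real.sqrt 5)*(a 2)*(a 4))*hr7
      · show (Xmat.mulVec a) ⬝ᵥ (S 2).mulVec (Xmat.mulVec a) = 0
        simp only [Sval0, Sval1, Sval2, Sval3, Sval4, S1, S2, S3, S4, S5, Rz, Xmat, Matrix.mulVec, dotProduct, sum9, Matrix.smul_apply, smul_eq_mul, Matrix.of_apply, Matrix.diagonal, nth0, nth1, nth2, nth3, nth4, nth5, nth6, nth7, nth8, Fin.reduceEq, reduceIte, ite_true, ite_false, h6', h14', h35']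
        linear_combination ((-1))*E2 + ((-9/8)*(Real.sqrt 3)*(a 2)*(a 5) + (-7/4)*(Real.sqrt 3)*(a 0)*(a 7) + (5/8)*(Real.sqrt 3)*(Real.sqrt 7)*(a 2)*(a 7) + (-9/8)*(Real.sqrt 3)*(Real.sqrt 7)^2*(a 2)*(a 5) + (-7/4)*(Real.sqrt 3)*(Real.sqrt 7)^2*(a 0)*(a 7) + (5/8)*(Real.sqrt 3)*(Real.sqrt 7)^3*(a 2)*(a 7))*hr2 + ((3/4)*(Real.sqrt 3)*(a 3)*(a 6) + (3/8)*(Real.sqrt 3)*(Real.sqrt 7)*(a 3)*(a 8) + (1/4)*(Real.sqrt 3)*(Real.sqrt 7)*(a 1)*(a 6) + (1/8)*(Real.sqrt 3)*(Real.sqrt 7)^2*(a 1)*(a 8))*hr5 + ((3)*(Real.sqrt 3)*(a 3)*(a 6) + (-9/4)*(Real.sqrt 3)*(a 2)*(a 5) + (29/8)*(Real.sqrt 3)*(a 1)*(a 8) + (-7/2)*(Real.sqrt 3)*(a 0)*(a 7) + (-5/8)*(Real.sqrt 3)*(Real.sqrt 7)*(a 3)*(a 8) + (5/4)*(Real.sqrt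 3)*(Real.sqrt 7)*(a 2)*(a 7) + (-1/4)*(Real.sqrt 3)*(Real.sqrt 5)*(a 3)*(a 4))*hr7
      · show (Xmat.mulVec a) ⬝ᵥ (S 3).mulVec (Xmat.mulVec a) = 0
        simp only [Sval0, Sval1, Sval2, Sval3, Sval4, S1, S2, S3, S4, S5, Rz, Xmat, Matrix.mulVec, dotProduct, sum9, Matrix.smul_apply, smul_eq_mul, Matrix.of_apply, Matrix.diagonal, nth0, nth1, nth2, nth3, nth4, nth5, nth6, nth7, nth8, Fin.reduceEq, reduceIte, ite_true, ite_false, h6', h14', h35']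
        linear_combination ((-1/2)*(Real.sqrt 3))*E0 + ((1/2))*E3 + ((-5/8)*(Real.sqrt 2)*(Real.sqrt 3)*(a 2)^2 + (-1/4)*(Real.sqrt 2)*(Real.sqrt 3)*(Real.sqrt 7)*(a 5)*(a 7) + (-13/8)*(Real.sqrt 2)*(Real.sqrt 3)*(Real.sqrt 7)*(a 0)*(a 2) + (-1/4)*(Real.sqrt 2)*(Real.sqrt 3)*(Real.sqrt 7)^2*(a 7)^2 + (1/4)*(Real.sqrt 2)*(Real.sqrt 3)*(Real.sqrt 7)^2*(a 5)^2 + (3/8)*(Real.sqrt 2)*(Real.sqrt 3)*(Real.sqrt 7)^2*(a 2)^2 + (-1)*(Real.sqrt 2)*(Real.sqrt 3)*(Real.sqrt 7)^2*(a 0)^2 + (1/4)*(Real.sqrt 2)*(Real.sqrt 3)*(Real.sqrt 7)^3*(a 5)*(a 7) + (3/8)*(Real.sqrt 2)*(Real.sqrt 3)*(Real.sqrt 7)^3*(a 0)*(a 2))*hr2 + ((3/2)*(Real.sqrt 2)*(Real.sqrt 3)*(a 6)^2 + (9/8)*(Real.sqrt 2)*(Real.sqrt 3)*(a 4)^2 +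 (-3/8)*(Real.sqrt 2)*(Real.sqrt 3)*(Real.sqrt 7)^2*(a 8)^2 + (1/8)*(Real.sqrt 2)*(Real.sqrt 3)*(Real.sqrt 7)^2*(a 4)^2 + (3/4)*(Real.sqrt 2)*(Real.sqrt 3)*(Real.sqrt 5)*(a 4)*(a 6) + (3/8)*(Real.sqrt 2)*(Real.sqrt 3)*(Real.sqrt 5)*(Real.sqrt 7)*(a 4)*(a 8))*hr5 + ((-2)*(Real.sqrt 2)*(Real.sqrt 3)*(a 8)^2 + (-1/2)*(Real.sqrt 2)*(Real.sqrt 3)*(a 7)^2 + (-1/2)*(Real.sqrt 2)*(Real.sqrt 3)*(a 6)^2 + (1/2)*(Real.sqrt 2)*(Real.sqrt 3)*(a 5)^2 + (5/8)*(Real.sqrt 2)*(Real.sqrt 3)*(a 4)^2 + (9/8)*(Real.sqrt 2)*(Real.sqrt 3)*(a 3)^2 + (3/4)*(Real.sqrt 2)*(Real.sqrt 3)*(a 2)^2 + (-1/2)*(Real.sqrt 2)*(Real.sqrt 3)*(a 1)^2 + (-2)*(Real.sqrt 2)*(Real.sqrt 3)*(a 0)^2 + (1/4)*(Real.sqrt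 2)*(Real.sqrt 3)*(Real.sqrt 7)*(a 6)*(a 8) + (1/2)*(Real.sqrt 2)*(Real.sqrt 3)*(Real.sqrt 7)*(a 5)*(a 7) + (3/8)*(Real.sqrt 2)*(Real.sqrt 3)*(Real.sqrt 7)*(a 1)*(a 3) + (3/4)*(Real.sqrt 2)*(Real.sqrt 3)*(Real.sqrt 7)*(a 0)*(a 2) + (-1/8)*(Real.sqrt 2)*(Real.sqrt 3)*(Real.sqrt 5)*(Real.sqrt 7)*(a 4)*(a 8))*hr7
      · show (Xmat.mulVec a) ⬝ᵥ (S 4).mulVec (Xmat.mulVec a) = 0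
        simp only [Sval0, Sval1, Sval2, Sval3, Sval4, S1, S2, S3, S4, S5, Rz, Xmat, Matrix.mulVec, dotProduct, sum9, Matrix.smul_apply, smul_eq_mul, Matrix.of_apply, Matrix.diagonal, nth0, nth1, nth2, nth3, nth4, nth5, nth6, nth7, nth8, Fin.reduceEq, reduceIte, ite_true, ite_false, h6', h14', h35']
        linear_combination ((1))*E1 + ((15/4)*(Real.sqrt 3)*(a 2)*(a 3) + (-1/2)*(Real.sqrt 3)*(Real.sqrt 7)*(a 6)*(a 7) + (-1/8)*(Real.sqrt 3)*(Real.sqrt 7)*(a 5)*(a 8) + (19/8)*(Real.sqrt 3)*(Real.sqrt 7)*(a 1)*(a 2) + (21/8)*(Real.sqrt 3)*(Real.sqrt 7)*(a 0)*(a 3) + (1/8)*(Real.sqrt 3)*(Real.sqrt 7)^2*(a 7)*(a 8) + (3/4)*(Real.sqrt 3)*(Real.sqrt 7)^2*(a 5)*(a 6) + (3/4)*(Real.sqrt 3)*(Real.sqrt 7)^2*(a 2)*(a 3) + (2)*(Real.sqrt 3)*(Real.sqrt 7)^2*(a 0)*(a 1) + (1/4)*(Real.sqrt 3)*(Real.sqrt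 7)^3*(a 6)*(a 7) + (-1/4)*(Real.sqrt 3)*(Real.sqrt 7)^3*(a 5)*(a 8) + (3/8)*(Real.sqrt 3)*(Real.sqrt 7)^3*(a 1)*(a 2) + (-3/8)*(Real.sqrt 3)*(Real.sqrt 7)^3*(a 0)*(a 3) + (9/8)*(Real.sqrt 3)*(Real.sqrt 5)*(a 4)*(a 5) + (7/8)*(Real.sqrt 3)*(Real.sqrt 5)*(Real.sqrt 7)*(a 4)*(a 7) + (1/8)*(Real.sqrt 3)*(Real.sqrt 5)*(Real.sqrt 7)^2*(a 4)*(a 5) + (-1/8)*(Real.sqrt 3)*(Real.sqrt 5)*(Real.sqrt 7)^3*(a 4)*(a 7) + (3/4)*(Real.sqrt 3)*(Real.sqrt 5)^2*(a 5)*(a 6) + (3/4)*(Real.sqrt 3)*(Real.sqrt 5)^2*(Real.sqrt 7)*(a 6)*(a 7) + (3/8)*(Real.sqrt 3)*(Real.sqrt 5)^2*(Real.sqrt 7)*(a 5)*(a 8) + (3/8)*(Real.sqrt 3)*(Real.sqrt 5)^2*(Real.sqrt 7)^2*(a 7)*(a 8))*hr2 + ((3/2)*(Real.sqrt 3)*(a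 5)*(a 6) + (3/2)*(Real.sqrt 3)*(Real.sqrt 7)*(a 6)*(a 7) + (3/4)*(Real.sqrt 3)*(Real.sqrt 7)*(a 5)*(a 8) + (3/4)*(Real.sqrt 3)*(Real.sqrt 7)^2*(a 7)*(a 8))*hr5 + ((4)*(Real.sqrt 3)*(a 7)*(a 8) + (3/2)*(Real.sqrt 3)*(a 5)*(a 6) + (3/2)*(Real.sqrt 3)*(a 2)*(a 3) + (4)*(Real.sqrt 3)*(a 0)*(a 1) + (1/2)*(Real.sqrt 3)*(Real.sqrt 7)*(a 6)*(a 7) + (-1/2)*(Real.sqrt 3)*(Real.sqrt 7)*(a 5)*(a 8) + (3/4)*(Real.sqrt 3)*(Real.sqrt 7)*(a 1)*(a 2) + (-3/4)*(Real.sqrt 3)*(Real.sqrt 7)*(a 0)*(a 3) + (1/4)*(Real.sqrt 3)*(Real.sqrt 5)*(a 4)*(a 5) + (-1/4)*(Real.sqrt 3)*(Real.sqrt 5)*(Real.sqrt 7)*(a 4)*(a 7))*hr7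
end
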